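/- For every g ∈ Spin(3,1), the element p(g) := i·g⁻¹·I·g is purely imaginary, i.e. lies in ℂ·I ⊕ ℂ·J ⊕ ℂ·K (in fact in ℂ·iI ⊕ ℂ·J ⊕ ℂ·iK ∩ imaginaries), and satisfies H(p(g), p(g)) = -1. Hence p maps Spin(3,1) into the quadric Q = {ξ ∈ Im H^C : H(ξ,ξ) = -1}. -/

import Mathlib

open Quaternion

noncomputable section

/-- The "hat" involution on complexified quaternions: complex-conjugate each coefficient. -/
def hatQ (q : ℍ[ℂ]) : ℍ[ℂ] :=
  ⟨(starRingEnd ℂ) q.re, (starRingEnd ℂ) q.imI, (starRingEnd ℂ) q.imJ, (starRingEnd ℂ) q.imK⟩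

/-- Quaternionic conjugation: negate the I, J, K components. -/
def conjQ (q : ℍ[ℂ]) : ℍ[ℂ] := ⟨q.re, -q.imI, -q.imJ, -q.imK⟩

/-- The complex bilinear form H(q,q') = q1q1' + q2q2' + q3q3' + q4q4'. -/
def Hform (p q : ℍ[ℂ]) : ℂ := p.re * q.re + p.imI * q.imI + p.imJ * q.imJ + p.imK * q.imK

def Iq : ℍ[ℂ] := ⟨0,1,0,0⟩
def Jq : ℍ[ℂ] := ⟨0,0,1,0⟩
def Kq : ℍ[ℂ] := ⟨0,0,0,1⟩

/-! The quaternionic conjugate `star g` plays the role of `g⁻¹`, and `H(q, q)` is the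
multiplicative norm `normSq q`. Conjugating the pure quaternion `I` by `g` keeps it pure
(since `star` reverses products and negates pure quaternions), and multiplicativity gives
`H(i x, i x) = i² normSq g · normSq I · normSq g = -1`. -/

theorem conjQ_eq_star (q : ℍ[ℂ]) : conjQ q = star q := by
  ext <;> simp [conjQ]

theorem Hform_self_eq_normSq (q : ℍ[ℂ]) : Hform q q = normSq q := by
  rw [normSq_def', Hform]
  ring

theorem normSq_Iq : normSq Iq = 1 := by
  rw [normSq_def']
  simp [Iq]

theorem Quaternion.re_star_mul_mul_eq_zero {R : Type*} [CommRing R] [NoZeroDivisors R]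
    [CharZero R] (g : ℍ[R]) {u : ℍ[R]} (hu : u.re = 0) : (star g * u * g).re = 0 := by
  rw [← star_eq_neg, star_mul, star_mul, star_star, star_eq_neg.mpr hu]
  noncomm_ring

theorem gauss_map_lands_in_quadric (g : ℍ[ℂ]) (hg : Hform g g = 1) :
    (Complex.I • (conjQ g * Iq * g)).re = 0 ∧
    Hform (Complex.I • (conjQ g * Iq * g)) (Complex.I • (conjQ g * Iq * g)) = -1 := by
  rw [Hform_self_eq_normSq] at hg
  rw [conjQ_eq_star]
  constructor
  · rw [re_smul, Quaternion.re_star_mul_mul_eq_zero g (show Iq.re = 0 from rfl), smul_zero]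
  · rw [Hform_self_eq_normSq, normSq_smul, map_mul, map_mul, normSq_star, hg, normSq_Iq,
      Complex.I_sq]
    ring
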